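/- (ℓ1-norm bound on the solution found from zero initialization) Let P : ℝⁿ → ℝᵐ be continuously differentiable, u⁰ = 0, s = ‖P(0)‖_∞ > 0, and let μ, L > 0 and ρ > 0 satisfy: ‖P'(u)ᵀh‖_∞ ≥ μ‖h‖₁ for all h ∈ ℝᵐ and all u ∈ B_ρ = {u : ‖u‖₁ ≤ ρ}; ‖(P'(a) − P'(b))v‖_∞ ≤ L‖a−b‖₁‖v‖₁ for all a, b ∈ B_ρ, v ∈ ℝⁿ; and ρ ≥ (μ/L)·(k_max + 2H₀(v̄/2)), where k_max = max{0, ⌈2Ls/μ²⌉ − 2} and v̄ = Ls/μ² − k_max/2. Then every damped sparse-Newton sequence (uᵏ) from u⁰ = 0 converges to a point u* with P(u*) = 0 and ‖u*‖₁ ≤ (μ/L)·(k_max + 2H₀(v̄/2)). -/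

import Mathlib

open Filter Topology

/-- The ℓ1-norm on `ℝ^d`: `‖x‖₁ = Σᵢ |xᵢ|`. -/
noncomputable def l1Norm {d : ℕ} (x : Fin d → ℝ) : ℝ := ∑ i, |x i|

/-- The ℓ∞-norm on `ℝ^d`: `‖x‖_∞ = maxᵢ |xᵢ|`. -/
noncomputable def linfNorm {d : ℕ} (x : Fin d → ℝ) : ℝ := ⨆ i, |x i|

/-- `H₀(δ) = Σ_{ℓ=0}^∞ δ^(2^ℓ)`. -/
noncomputable def H0 (δ : ℝ) : ℝ := ∑' ℓ : ℕ, δ ^ (2 ^ ℓ)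

/-- The transpose of a continuous linear map `A : ℝⁿ → ℝᵐ` applied to `h ∈ ℝᵐ`:
`(Aᵀ h)ᵢ = Σⱼ Aⱼᵢ hⱼ` where `Aⱼᵢ = (A eᵢ)ⱼ`. -/
noncomputable def transposeApply {n m : ℕ} (A : (Fin n → ℝ) →L[ℝ] (Fin m → ℝ))
    (h : Fin m → ℝ) : Fin n → ℝ :=
  fun i => ∑ j, A (Pi.single i 1) j * h j

/-! Write `aₖ = L‖P(uᵏ)‖_∞ / μ²` for the scaled residual. By ℓ1–ℓ∞ duality and Hahn–Banach, the
lower bound on `P'(u)ᵀ` makes the ℓ1-minimal Newton direction satisfy `‖wᵏ‖₁ ≤ ‖P(uᵏ)‖_∞ / μ`,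
and the Lipschitz bound on `P'` gives a second-order Taylor estimate. Together they give
`‖uᵏ⁺¹ - uᵏ‖₁ ≤ (μ/L) min(aₖ, 1)` and `aₖ₊₁ ≤ φ(aₖ)` with `φ(a) = a - 1/2` for `a ≥ 1` and
`φ(a) = a²/2` for `a ≤ 1`, as long as the iterates stay in `B_ρ`. Iterating `φ` from
`a₀ = Ls/μ²` decreases it by `1/2` during `k_max` steps down to `v̄ ∈ (0, 1]` and then squares it,
so `a_{k_max + j} ≤ 2 (v̄/2)^(2^j)`. The step lengths therefore sum to at most
`(μ/L)(k_max + 2H₀(v̄/2)) ≤ ρ`, which keeps every iterate in `B_ρ` and makes `(uᵏ)` Cauchy, while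
`aₖ → 0` forces `P(u*) = 0`. -/

section Norms

variable {d : ℕ}

theorem l1Norm_eq_norm (x : Fin d → ℝ) : l1Norm x = ‖WithLp.toLp 1 x‖ := by
  simp [l1Norm, PiLp.norm_eq_of_L1]

theorem linfNorm_eq_norm (x : Fin d → ℝ) : linfNorm x = ‖x‖ := by
  refine le_antisymm (Real.iSup_le (fun i => norm_le_pi_norm x i) (norm_nonneg x)) ?_
  refine (pi_norm_le_iff_of_nonneg (Real.iSup_nonneg fun i => abs_nonneg _)).2 fun i => ?_
  exact le_ciSup (Set.finite_range fun j => |x j|).bddAbove i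

theorem l1Norm_nonneg (x : Fin d → ℝ) : 0 ≤ l1Norm x := by
  rw [l1Norm_eq_norm]; exact norm_nonneg _

theorem l1Norm_add_le (x y : Fin d → ℝ) : l1Norm (x + y) ≤ l1Norm x + l1Norm y := by
  simp only [l1Norm_eq_norm, WithLp.toLp_add, norm_add_le]

theorem l1Norm_smul (c : ℝ) (x : Fin d → ℝ) : l1Norm (c • x) = |c| * l1Norm x := by
  simp only [l1Norm_eq_norm, WithLp.toLp_smul, norm_smul, Real.norm_eq_abs]

theorem l1Norm_neg (x : Fin d → ℝ) : l1Norm (-x) = l1Norm x := by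
  simp only [l1Norm_eq_norm, WithLp.toLp_neg, norm_neg]

theorem l1Norm_sub_le (x y : Fin d → ℝ) : l1Norm (x - y) ≤ l1Norm x + l1Norm y := by
  simp only [l1Norm_eq_norm, WithLp.toLp_sub, norm_sub_le]

@[simp] theorem l1Norm_zero : l1Norm (0 : Fin d → ℝ) = 0 := by simp [l1Norm]

theorem continuous_l1Norm : Continuous (l1Norm (d := d)) :=
  continuous_finsetSum _ fun i _ => (continuous_apply i).abs

theorem norm_le_l1Norm (x : Fin d → ℝ) : ‖x‖ ≤ l1Norm x := by
  rw [← linfNorm_eq_norm]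
  exact Real.iSup_le (fun i => Finset.single_le_sum (fun j _ => abs_nonneg (x j))
    (Finset.mem_univ i)) (l1Norm_nonneg x)

theorem sum_mul_le_linfNorm_mul_l1Norm (x y : Fin d → ℝ) :
    ∑ i, x i * y i ≤ linfNorm x * l1Norm y := by
  rw [l1Norm, Finset.mul_sum]
  refine Finset.sum_le_sum fun i _ => ?_
  rw [linfNorm_eq_norm]
  calc x i * y i ≤ |x i| * |y i| := by rw [← abs_mul]; exact le_abs_self _
    _ ≤ ‖x‖ * |y i| := by gcongr; exact norm_le_pi_norm x i

theorem exists_l1Norm_le_sum_mul_eq (g : Fin d → ℝ) {κ : ℝ} (hκ : 0 ≤ κ) :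
    ∃ v : Fin d → ℝ, l1Norm v ≤ κ ∧ ∑ i, v i * g i = κ * linfNorm g := by
  rcases isEmpty_or_nonempty (Fin d) with hd | hd
  · exact ⟨0, by simp [hκ], by simp [linfNorm]⟩
  obtain ⟨i₀, hi₀⟩ := exists_eq_ciSup_of_finite (f := fun i => |g i|)
  refine ⟨Pi.single i₀ (κ * SignType.sign (g i₀)), ?_, ?_⟩
  · rw [l1Norm, Finset.sum_eq_single i₀ (fun i _ hi => by simp [hi]) (by simp)]
    simp only [Pi.single_eq_same, abs_mul, abs_of_nonneg hκ]
    exact mul_le_of_le_one_right hκ (by rcases SignType.sign (g i₀) with _ | _ | _ <;> simp)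
  · rw [Finset.sum_eq_single i₀ (fun i _ hi => by simp [hi]) (by simp), Pi.single_eq_same,
      mul_assoc, sign_mul_self, hi₀, linfNorm]

theorem isCompact_l1NormBall (κ : ℝ) : IsCompact {v : Fin d → ℝ | l1Norm v ≤ κ} :=
  Metric.isCompact_of_isClosed_isBounded (isClosed_le continuous_l1Norm continuous_const)
    ((Metric.isBounded_closedBall (x := 0) (r := κ)).subset fun v hv =>
      mem_closedBall_zero_iff.2 ((norm_le_l1Norm v).trans hv))

theorem convex_l1NormBall (κ : ℝ) : Convex ℝ {v : Fin d → ℝ | l1Norm v ≤ κ} := by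
  intro x hx y hy a b ha hb hab
  calc l1Norm (a • x + b • y) ≤ a * l1Norm x + b * l1Norm y := by
        simpa only [l1Norm_smul, abs_of_nonneg ha, abs_of_nonneg hb] using
          l1Norm_add_le (a • x) (b • y)
    _ ≤ a * κ + b * κ := by gcongr; exacts [hx, hy]
    _ = κ := by rw [← add_mul, hab, one_mul]

end Norms

theorem LinearMap.apply_eq_sum_mul_apply_single {d : ℕ} (f : (Fin d → ℝ) →ₗ[ℝ] ℝ)
    (x : Fin d → ℝ) : f x = ∑ i, x i * f (Pi.single i 1) := by
  rw [f.pi_apply_eq_sum_univ x]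
  refine Finset.sum_congr rfl fun i _ => ?_
  rw [smul_eq_mul]
  congr 2
  funext j
  simp [Pi.single_apply, eq_comm]

/-- If `b` were outside the image of the ℓ1-ball of radius `κ = ‖b‖_∞ / μ`, a separating functional
`h` would give `‖b‖_∞ ‖h‖₁ ≥ ⟨b, h⟩ > max_{‖v‖₁ ≤ κ} ⟨Av, h⟩ = κ ‖Aᵀh‖_∞ ≥ ‖b‖_∞ ‖h‖₁`. -/
theorem exists_apply_eq_l1Norm_le {n m : ℕ} (A : (Fin n → ℝ) →L[ℝ] (Fin m → ℝ)) {μ : ℝ}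
    (hμ : 0 < μ) (hA : ∀ h, μ * l1Norm h ≤ linfNorm (transposeApply A h)) (b : Fin m → ℝ) :
    ∃ v, A v = b ∧ l1Norm v ≤ linfNorm b / μ := by
  set κ := linfNorm b / μ
  have hκ : 0 ≤ κ := div_nonneg (by rw [linfNorm_eq_norm]; exact norm_nonneg b) hμ.le
  by_contra! hb
  have hbK : b ∉ A '' {v | l1Norm v ≤ κ} := by
    rintro ⟨v, hv, rfl⟩
    exact (hb v rfl).not_ge hv
  obtain ⟨f, t, hfK, htb⟩ := geometric_hahn_banach_closed_point
    ((convex_l1NormBall κ).linear_image A.toLinearMap)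
    ((isCompact_l1NormBall κ).image A.continuous).isClosed hbK
  set h : Fin m → ℝ := fun j => f (Pi.single j 1)
  obtain ⟨v, hvκ, hv⟩ := exists_l1Norm_le_sum_mul_eq (transposeApply A h) hκ
  have hfA : ∀ i, transposeApply A h i = f (A (Pi.single i 1)) := fun i =>
    (f.toLinearMap.apply_eq_sum_mul_apply_single _).symm
  have hfb : f b ≤ f (A v) := calc
    f b = ∑ j, b j * h j := f.toLinearMap.apply_eq_sum_mul_apply_single b
    _ ≤ linfNorm b * l1Norm h := sum_mul_le_linfNorm_mul_l1Norm b h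
    _ = κ * (μ * l1Norm h) := by rw [← mul_assoc, div_mul_cancel₀ _ hμ.ne']
    _ ≤ κ * linfNorm (transposeApply A h) := by gcongr; exact hA h
    _ = ∑ i, v i * transposeApply A h i := hv.symm
    _ = f (A v) := by
      simp only [hfA]
      exact ((f.comp A).toLinearMap.apply_eq_sum_mul_apply_single v).symm
  exact (hfK (A v) ⟨v, hvκ, rfl⟩).not_ge (htb.le.trans hfb)

theorem norm_image_add_sub_sub_fderiv_le {E F : Type*} [NormedAddCommGroup E] [NormedSpace ℝ E]
    [NormedAddCommGroup F] [NormedSpace ℝ F] {f : E → F} (hf : Differentiable ℝ f) (x d : E)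
    {C : ℝ} (hC : ∀ t ∈ Set.Icc (0 : ℝ) 1, ‖(fderiv ℝ f (x + t • d) - fderiv ℝ f x) d‖ ≤ C * t) :
    ‖f (x + d) - f x - fderiv ℝ f x d‖ ≤ C / 2 := by
  set g : ℝ → F := fun t => f (x + t • d) - f x - t • fderiv ℝ f x d
  have hg : ∀ t, HasDerivAt g ((fderiv ℝ f (x + t • d) - fderiv ℝ f x) d) t := by
    intro t
    have hline : HasDerivAt (fun t : ℝ => x + t • d) d t := by
      simpa using ((hasDerivAt_id t).smul_const d).const_add x
    convert (((hf _).hasFDerivAt.comp_hasDerivAt t hline).sub_const (f x)).sub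
      ((hasDerivAt_id t).smul_const (fderiv ℝ f x d)) using 1
    · rfl
    · simp
  have hB : ∀ t, HasDerivAt (fun t : ℝ => C / 2 * (t * t)) (C * t) t := fun t =>
    (((hasDerivAt_id' t).mul (hasDerivAt_id' t)).const_mul (C / 2)).congr_deriv (by ring)
  have hfence := image_norm_le_of_norm_deriv_right_le_deriv_boundary
    (fun t _ => (hg t).continuousAt.continuousWithinAt) (fun t _ => (hg t).hasDerivWithinAt)
    (by simp [g]) hB (fun t ht => hC t (Set.Ico_subset_Icc_self ht))
    (Set.right_mem_Icc.2 zero_le_one)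
  simpa [g] using hfence

theorem linfNorm_image_sub_smul_le {n m : ℕ} {P : (Fin n → ℝ) → (Fin m → ℝ)}
    (hP : Differentiable ℝ P) {L : ℝ} {K : Set (Fin n → ℝ)}
    (hLip : ∀ a ∈ K, ∀ b ∈ K, ∀ v : Fin n → ℝ,
      linfNorm ((fderiv ℝ P a - fderiv ℝ P b) v) ≤ L * l1Norm (a - b) * l1Norm v)
    {x w : Fin n → ℝ} (hw : fderiv ℝ P x w = P x) {γ : ℝ} (hγ1 : γ ≤ 1)
    (hseg : ∀ t ∈ Set.Icc (0 : ℝ) 1, x - t • γ • w ∈ K) :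
    linfNorm (P (x - γ • w)) ≤ L / 2 * l1Norm (γ • w) ^ 2 + (1 - γ) * linfNorm (P x) := by
  set d := -(γ • w)
  have hxd : ∀ t : ℝ, x + t • d = x - t • γ • w := fun t => by
    simp only [d, smul_neg, sub_eq_add_neg]
  have hC : ∀ t ∈ Set.Icc (0 : ℝ) 1,
      ‖(fderiv ℝ P (x + t • d) - fderiv ℝ P x) d‖ ≤ L * l1Norm d ^ 2 * t := by
    intro t ht
    have hx : x ∈ K := by simpa using hseg 0 ⟨le_rfl, zero_le_one⟩
    rw [← linfNorm_eq_norm]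
    calc _ ≤ L * l1Norm (x + t • d - x) * l1Norm d := hLip _ (hxd t ▸ hseg t ht) _ hx d
      _ = L * l1Norm d ^ 2 * t := by
        rw [add_sub_cancel_left, l1Norm_smul, abs_of_nonneg ht.1]
        ring
  have hnext : P (x - γ • w) = (P (x + d) - P x - fderiv ℝ P x d) + (1 - γ) • P x := by
    simp only [d, map_neg, map_smul, hw, ← sub_eq_add_neg]
    module
  rw [hnext, linfNorm_eq_norm, linfNorm_eq_norm, ← l1Norm_neg]
  refine (norm_add_le _ _).trans (add_le_add ?_ ?_)
  · exact (norm_image_add_sub_sub_fderiv_le hP x d hC).trans_eq (by ring)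
  · rw [norm_smul, Real.norm_of_nonneg (sub_nonneg.2 hγ1)]

/-- One damped sparse-Newton step maps the scaled residual `a` to at most `newtonMajorant a`:
the damped phase `a > 1` and the quadratic phase `a ≤ 1`. -/
noncomputable def newtonMajorant (a : ℝ) : ℝ := if a ≤ 1 then a ^ 2 / 2 else a - 1 / 2

/-- The step size `γ = min {1, μ² / (L‖P(u)‖_∞)}` in terms of the scaled residual `a`. -/
noncomputable def dampedStepSize (a : ℝ) : ℝ := if a = 0 then 1 else min 1 a⁻¹

section Majorant

variable {a b : ℝ}

theorem newtonMajorant_of_le_one (ha : a ≤ 1) : newtonMajorant a = a ^ 2 / 2 := if_pos ha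

theorem newtonMajorant_of_one_le (ha : 1 ≤ a) : newtonMajorant a = a - 1 / 2 := by
  rcases ha.eq_or_lt with rfl | ha
  · norm_num [newtonMajorant]
  · exact if_neg ha.not_ge

theorem newtonMajorant_nonneg (a : ℝ) : 0 ≤ newtonMajorant a := by
  unfold newtonMajorant
  split_ifs with ha
  · positivity
  · linarith

theorem newtonMajorant_mono (ha : 0 ≤ a) (hab : a ≤ b) : newtonMajorant a ≤ newtonMajorant b := by
  rcases le_total b 1 with hb | hb
  · rw [newtonMajorant_of_le_one hb, newtonMajorant_of_le_one (hab.trans hb)]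
    gcongr
  rcases le_total a 1 with ha1 | ha1
  · rw [newtonMajorant_of_one_le hb, newtonMajorant_of_le_one ha1]
    nlinarith
  · rw [newtonMajorant_of_one_le hb, newtonMajorant_of_one_le ha1]
    linarith

theorem dampedStepSize_of_le_one (ha : 0 < a) (ha1 : a ≤ 1) : dampedStepSize a = 1 := by
  rw [dampedStepSize, if_neg ha.ne', min_eq_left (one_le_inv₀ ha |>.2 ha1)]

theorem dampedStepSize_of_one_le (ha : 1 ≤ a) : dampedStepSize a = a⁻¹ := by
  rw [dampedStepSize, if_neg (by positivity), min_eq_right (inv_le_one_of_one_le₀ ha)]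

theorem dampedStepSize_mem_Icc (ha : 0 ≤ a) : dampedStepSize a ∈ Set.Icc 0 1 := by
  rcases ha.eq_or_lt with rfl | ha
  · simp [dampedStepSize]
  rcases le_total a 1 with ha1 | ha1
  · simp [dampedStepSize_of_le_one ha ha1]
  · rw [dampedStepSize_of_one_le ha1]
    exact ⟨by positivity, inv_le_one_of_one_le₀ ha1⟩

theorem dampedStepSize_mul_self (ha : 0 ≤ a) : dampedStepSize a * a = min a 1 := by
  rcases ha.eq_or_lt with rfl | ha
  · simp
  rcases le_total a 1 with ha1 | ha1
  · rw [dampedStepSize_of_le_one ha ha1, one_mul, min_eq_left ha1]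
  · rw [dampedStepSize_of_one_le ha1, inv_mul_cancel₀ ha.ne', min_eq_right ha1]

theorem dampedStepSize_residual_eq (ha : 0 ≤ a) :
    (dampedStepSize a * a) ^ 2 / 2 + (1 - dampedStepSize a) * a = newtonMajorant a := by
  rcases ha.eq_or_lt with rfl | ha
  · simp [newtonMajorant]
  rcases le_total a 1 with ha1 | ha1
  · rw [dampedStepSize_of_le_one ha ha1, newtonMajorant_of_le_one ha1]
    ring
  · rw [dampedStepSize_of_one_le ha1, newtonMajorant_of_one_le ha1, inv_mul_cancel₀ ha.ne']
    field_simp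
    ring

end Majorant

theorem summable_pow_two_pow {δ : ℝ} (hδ : 0 ≤ δ) (hδ1 : δ < 1) :
    Summable fun ℓ : ℕ => δ ^ 2 ^ ℓ :=
  (summable_geometric_of_lt_one hδ hδ1).of_nonneg_of_le (fun ℓ => by positivity)
    fun ℓ => pow_le_pow_of_le_one hδ hδ1.le (Nat.lt_two_pow_self).le

/-- The iterates of `newtonMajorant` from `2δ + N/2`: they decrease by `1/2` for `N` steps down to
`2δ` and are then squared (halved). The theorem uses `N = k_max` and `δ = v̄/2`. -/
noncomputable def newtonBound (N : ℕ) (δ : ℝ) (k : ℕ) : ℝ :=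
  if k ≤ N then 2 * δ + ((N : ℝ) - k) / 2 else 2 * δ ^ 2 ^ (k - N)

section NewtonBound

variable {N : ℕ} {δ : ℝ}

theorem newtonBound_of_le {k : ℕ} (hk : k ≤ N) :
    newtonBound N δ k = 2 * δ + ((N : ℝ) - k) / 2 := if_pos hk

theorem newtonBound_of_ge {k : ℕ} (hk : N ≤ k) : newtonBound N δ k = 2 * δ ^ 2 ^ (k - N) := by
  rcases hk.eq_or_lt with rfl | hk
  · simp [newtonBound]
  · exact if_neg hk.not_ge

theorem newtonBound_add (i : ℕ) : newtonBound N δ (i + N) = 2 * δ ^ 2 ^ i := by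
  rw [newtonBound_of_ge (Nat.le_add_left N i), Nat.add_sub_cancel]

theorem newtonMajorant_newtonBound (hδ : 0 ≤ δ) (hδ1 : δ ≤ 1 / 2) (hN : 1 ≤ N → 1 / 4 ≤ δ)
    (k : ℕ) : newtonMajorant (newtonBound N δ k) = newtonBound N δ (k + 1) := by
  rcases lt_or_ge k N with hk | hk
  · have hk' : (k : ℝ) + 1 ≤ N := by exact_mod_cast hk
    have hδN := hN (by omega)
    rw [newtonBound_of_le hk.le, newtonBound_of_le hk, newtonMajorant_of_one_le (by linarith)]
    push_cast
    ring
  · have hle : δ ^ 2 ^ (k - N) ≤ δ := by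
      simpa using pow_le_pow_of_le_one hδ (by linarith) (Nat.one_le_two_pow (n := k - N))
    rw [newtonBound_of_ge hk, newtonBound_of_ge (by omega), newtonMajorant_of_le_one (by linarith),
      Nat.sub_add_comm hk, pow_succ 2 (k - N), pow_mul]
    ring

theorem summable_min_newtonBound (hδ : 0 ≤ δ) (hδ1 : δ < 1) :
    Summable fun k => min (newtonBound N δ k) 1 := by
  rw [← summable_nat_add_iff N]
  refine ((summable_pow_two_pow hδ hδ1).mul_left 2).of_nonneg_of_le
    (fun i => le_min (by rw [newtonBound_add]; positivity) zero_le_one) fun i => ?_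
  rw [← newtonBound_add]
  exact min_le_left _ _

theorem tsum_min_newtonBound_le (hδ : 0 ≤ δ) (hδ1 : δ < 1) :
    ∑' k, min (newtonBound N δ k) 1 ≤ N + 2 * H0 δ := by
  rw [← (summable_min_newtonBound hδ hδ1).sum_add_tsum_nat_add N, H0, ← tsum_mul_left]
  refine add_le_add ?_ (Summable.tsum_le_tsum (fun i => ?_)
    ((summable_nat_add_iff N).2 (summable_min_newtonBound hδ hδ1))
    ((summable_pow_two_pow hδ hδ1).mul_left 2))
  · calc ∑ k ∈ Finset.range N, min (newtonBound N δ k) 1 ≤ ∑ k ∈ Finset.range N, (1 : ℝ) :=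
          Finset.sum_le_sum fun k _ => min_le_right _ _
      _ = N := by simp
  · rw [← newtonBound_add]
    exact min_le_left _ _

theorem tendsto_newtonBound (hδ : 0 ≤ δ) (hδ1 : δ < 1) :
    Tendsto (newtonBound N δ) atTop (𝓝 0) := by
  rw [← tendsto_add_atTop_iff_nat N]
  simpa only [newtonBound_add] using ((summable_pow_two_pow hδ hδ1).mul_left 2).tendsto_atTop_zero

end NewtonBound

theorem sub_half_bounds_of_eq_max_ceil {a : ℝ} {k : ℤ} (ha : 0 < a)
    (hk : k = max 0 (⌈2 * a⌉ - 2)) :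
    0 < a - k / 2 ∧ a - k / 2 ≤ 1 ∧ (0 < k → 1 / 2 < a - k / 2) := by
  have hceil := Int.le_ceil (2 * a)
  have hceil' := Int.ceil_lt_add_one (2 * a)
  rcases le_total (⌈2 * a⌉ - 2) 0 with hc | hc
  · rw [max_eq_left hc] at hk
    subst hk
    have : (⌈2 * a⌉ : ℝ) ≤ 2 := by exact_mod_cast (by omega : ⌈2 * a⌉ ≤ 2)
    simp only [Int.cast_zero, zero_div, sub_zero]
    exact ⟨ha, by linarith, fun h => absurd h (lt_irrefl 0)⟩
  · rw [max_eq_right hc] at hk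
    have hk' : (k : ℝ) = ⌈2 * a⌉ - 2 := by rw [hk]; push_cast; ring
    rw [hk']
    refine ⟨by linarith, by linarith, fun _ => by linarith⟩

noncomputable def scaledResidual {n m : ℕ} (P : (Fin n → ℝ) → (Fin m → ℝ)) (μ L : ℝ)
    (x : Fin n → ℝ) : ℝ :=
  L * linfNorm (P x) / μ ^ 2

theorem scaledResidual_nonneg {n m : ℕ} (P : (Fin n → ℝ) → (Fin m → ℝ)) {μ L : ℝ} (hL : 0 ≤ L)
    (x : Fin n → ℝ) : 0 ≤ scaledResidual P μ L x := by
  rw [scaledResidual, linfNorm_eq_norm]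
  positivity

structure IsDampedSparseNewton {n m : ℕ} (P : (Fin n → ℝ) → (Fin m → ℝ)) (μ L : ℝ)
    (u w : ℕ → Fin n → ℝ) (γ : ℕ → ℝ) : Prop where
  fderiv_apply_eq : ∀ k, fderiv ℝ P (u k) (w k) = P (u k)
  l1Norm_le : ∀ k, ∀ v, fderiv ℝ P (u k) v = P (u k) → l1Norm (w k) ≤ l1Norm v
  stepSize_eq : ∀ k, γ k = if P (u k) = 0 then 1 else min 1 (μ ^ 2 / (L * linfNorm (P (u k))))
  succ_eq : ∀ k, u (k + 1) = u k - γ k • w k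

namespace IsDampedSparseNewton

variable {n m : ℕ} {P : (Fin n → ℝ) → (Fin m → ℝ)} {μ L ρ : ℝ} {u w : ℕ → Fin n → ℝ}
  {γ : ℕ → ℝ}

theorem stepSize_eq_dampedStepSize (hseq : IsDampedSparseNewton P μ L u w γ) (hμ : 0 < μ)
    (hL : 0 < L) (k : ℕ) : γ k = dampedStepSize (scaledResidual P μ L (u k)) := by
  have hzero : scaledResidual P μ L (u k) = 0 ↔ P (u k) = 0 := by
    simp [scaledResidual, linfNorm_eq_norm, hL.ne', hμ.ne']
  simp only [hseq.stepSize_eq k, dampedStepSize, hzero]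
  rw [scaledResidual, inv_div]

theorem l1Norm_le_linfNorm_div (hseq : IsDampedSparseNewton P μ L u w γ) (hμ : 0 < μ) {k : ℕ}
    (hA : ∀ h, μ * l1Norm h ≤ linfNorm (transposeApply (fderiv ℝ P (u k)) h)) :
    l1Norm (w k) ≤ linfNorm (P (u k)) / μ := by
  obtain ⟨v, hv, hvle⟩ := exists_apply_eq_l1Norm_le (fderiv ℝ P (u k)) hμ hA (P (u k))
  exact (hseq.l1Norm_le k v hv).trans hvle

theorem l1Norm_step_le (hseq : IsDampedSparseNewton P μ L u w γ) (hμ : 0 < μ) (hL : 0 < L)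
    {k : ℕ} (hA : ∀ h, μ * l1Norm h ≤ linfNorm (transposeApply (fderiv ℝ P (u k)) h)) :
    l1Norm (γ k • w k) ≤ μ / L * min (scaledResidual P μ L (u k)) 1 := by
  have ha := scaledResidual_nonneg P (μ := μ) hL.le (u k)
  have hγ := hseq.stepSize_eq_dampedStepSize hμ hL k
  have hγ0 : 0 ≤ γ k := hγ ▸ (dampedStepSize_mem_Icc ha).1
  calc l1Norm (γ k • w k) = γ k * l1Norm (w k) := by rw [l1Norm_smul, abs_of_nonneg hγ0]
    _ ≤ γ k * (linfNorm (P (u k)) / μ) := by gcongr; exact hseq.l1Norm_le_linfNorm_div hμ hA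
    _ = μ / L * (γ k * scaledResidual P μ L (u k)) := by rw [scaledResidual]; field_simp
    _ = μ / L * min (scaledResidual P μ L (u k)) 1 := by rw [hγ, dampedStepSize_mul_self ha]

theorem scaledResidual_succ_le (hseq : IsDampedSparseNewton P μ L u w γ)
    (hP : Differentiable ℝ P) (hμ : 0 < μ) (hL : 0 < L) {K : Set (Fin n → ℝ)}
    (hLip : ∀ a ∈ K, ∀ b ∈ K, ∀ v : Fin n → ℝ,
      linfNorm ((fderiv ℝ P a - fderiv ℝ P b) v) ≤ L * l1Norm (a - b) * l1Norm v)
    {k : ℕ} (hA : ∀ h, μ * l1Norm h ≤ linfNorm (transposeApply (fderiv ℝ P (u k)) h))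
    (hseg : ∀ t ∈ Set.Icc (0 : ℝ) 1, u k - t • γ k • w k ∈ K) :
    scaledResidual P μ L (u (k + 1)) ≤ newtonMajorant (scaledResidual P μ L (u k)) := by
  set r := linfNorm (P (u k))
  set a := scaledResidual P μ L (u k)
  have ha : 0 ≤ a := scaledResidual_nonneg P hL.le (u k)
  have hγ := hseq.stepSize_eq_dampedStepSize hμ hL k
  obtain ⟨hγ0, hγ1⟩ : 0 ≤ γ k ∧ γ k ≤ 1 := hγ ▸ dampedStepSize_mem_Icc ha
  have hlen : l1Norm (γ k • w k) ≤ γ k * (r / μ) := by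
    rw [l1Norm_smul, abs_of_nonneg hγ0]
    gcongr
    exact hseq.l1Norm_le_linfNorm_div hμ hA
  have hres := linfNorm_image_sub_smul_le hP hLip (hseq.fderiv_apply_eq k) hγ1 hseg
  rw [← hseq.succ_eq k] at hres
  calc scaledResidual P μ L (u (k + 1))
      ≤ L * (L / 2 * (γ k * (r / μ)) ^ 2 + (1 - γ k) * r) / μ ^ 2 := by
        rw [scaledResidual]
        gcongr
        exact hres.trans (by gcongr; exact l1Norm_nonneg _)
    _ = (γ k * a) ^ 2 / 2 + (1 - γ k) * a := by
        simp only [a, scaledResidual]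
        field_simp
        ring
    _ = newtonMajorant a := by rw [hγ]; exact dampedStepSize_residual_eq ha

theorem bounds_of_majorant (hseq : IsDampedSparseNewton P μ L u w γ) (hP : Differentiable ℝ P)
    (hμ : 0 < μ) (hL : 0 < L)
    (hA : ∀ v ∈ {v | l1Norm v ≤ ρ}, ∀ h : Fin m → ℝ,
      μ * l1Norm h ≤ linfNorm (transposeApply (fderiv ℝ P v) h))
    (hLip : ∀ a ∈ {v | l1Norm v ≤ ρ}, ∀ b ∈ {v | l1Norm v ≤ ρ}, ∀ v : Fin n → ℝ,
      linfNorm ((fderiv ℝ P a - fderiv ℝ P b) v) ≤ L * l1Norm (a - b) * l1Norm v)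
    {B : ℕ → ℝ} (hB0 : scaledResidual P μ L (u 0) ≤ B 0)
    (hB : ∀ k, newtonMajorant (B k) ≤ B (k + 1))
    (hρ : ∀ k, l1Norm (u 0) + μ / L * ∑ j ∈ Finset.range k, min (B j) 1 ≤ ρ) (k : ℕ) :
    (l1Norm (u k) ≤ l1Norm (u 0) + μ / L * ∑ j ∈ Finset.range k, min (B j) 1 ∧
      scaledResidual P μ L (u k) ≤ B k) ∧
    l1Norm (u (k + 1) - u k) ≤ μ / L * min (B k) 1 := by
  set S : ℕ → ℝ := fun k => l1Norm (u 0) + μ / L * ∑ j ∈ Finset.range k, min (B j) 1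
  have hS : ∀ k, S (k + 1) = S k + μ / L * min (B k) 1 := fun k => by
    simp only [S, Finset.sum_range_succ]
    ring
  have step : ∀ k, l1Norm (u k) ≤ S k → scaledResidual P μ L (u k) ≤ B k →
      l1Norm (γ k • w k) ≤ μ / L * min (B k) 1 ∧
        l1Norm (u (k + 1)) ≤ S (k + 1) ∧ scaledResidual P μ L (u (k + 1)) ≤ B (k + 1) := by
    intro k hnorm hres
    have hAk := hA (u k) (hnorm.trans (hρ k))
    have hlen : l1Norm (γ k • w k) ≤ μ / L * min (B k) 1 :=
      (hseq.l1Norm_step_le hμ hL hAk).trans (by gcongr)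
    have hseg : ∀ t ∈ Set.Icc (0 : ℝ) 1, l1Norm (u k - t • γ k • w k) ≤ S (k + 1) := by
      intro t ht
      calc l1Norm (u k - t • γ k • w k) ≤ l1Norm (u k) + t * l1Norm (γ k • w k) :=
            (l1Norm_sub_le _ _).trans_eq (by rw [l1Norm_smul t, abs_of_nonneg ht.1])
        _ ≤ S k + 1 * (μ / L * min (B k) 1) := by
            gcongr
            · exact l1Norm_nonneg _
            · exact ht.2
        _ = S (k + 1) := by rw [hS, one_mul]
    refine ⟨hlen, by simpa [hseq.succ_eq k] using hseg 1 ⟨zero_le_one, le_rfl⟩, ?_⟩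
    refine (hseq.scaledResidual_succ_le hP hμ hL hLip hAk fun t ht =>
      (hseg t ht).trans (hρ (k + 1))).trans ?_
    exact (newtonMajorant_mono (scaledResidual_nonneg P hL.le _) hres).trans (hB k)
  have inv : ∀ k, l1Norm (u k) ≤ S k ∧ scaledResidual P μ L (u k) ≤ B k := by
    intro k
    induction k with
    | zero => exact ⟨by simp [S], hB0⟩
    | succ k ih => exact (step k ih.1 ih.2).2
  refine ⟨inv k, ?_⟩
  rw [hseq.succ_eq k, sub_sub_cancel_left, l1Norm_neg]
  exact (step k (inv k).1 (inv k).2).1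

theorem exists_tendsto_of_majorant (hseq : IsDampedSparseNewton P μ L u w γ)
    (hP : Differentiable ℝ P) (hμ : 0 < μ) (hL : 0 < L)
    (hA : ∀ v ∈ {v | l1Norm v ≤ ρ}, ∀ h : Fin m → ℝ,
      μ * l1Norm h ≤ linfNorm (transposeApply (fderiv ℝ P v) h))
    (hLip : ∀ a ∈ {v | l1Norm v ≤ ρ}, ∀ b ∈ {v | l1Norm v ≤ ρ}, ∀ v : Fin n → ℝ,
      linfNorm ((fderiv ℝ P a - fderiv ℝ P b) v) ≤ L * l1Norm (a - b) * l1Norm v)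
    {B : ℕ → ℝ} (hB0 : scaledResidual P μ L (u 0) ≤ B 0)
    (hB : ∀ k, newtonMajorant (B k) ≤ B (k + 1)) (hsum : Summable fun k => min (B k) 1)
    (hlim : Tendsto B atTop (𝓝 0)) (hρ : l1Norm (u 0) + μ / L * ∑' k, min (B k) 1 ≤ ρ) :
    ∃ ustar, Tendsto u atTop (𝓝 ustar) ∧ P ustar = 0 ∧
      l1Norm ustar ≤ l1Norm (u 0) + μ / L * ∑' k, min (B k) 1 := by
  have hBnn : ∀ k, 0 ≤ B k
    | 0 => (scaledResidual_nonneg P hL.le _).trans hB0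
    | k + 1 => (newtonMajorant_nonneg _).trans (hB k)
  have hpartial : ∀ k, l1Norm (u 0) + μ / L * ∑ j ∈ Finset.range k, min (B j) 1 ≤
      l1Norm (u 0) + μ / L * ∑' k, min (B k) 1 := fun k => by
    gcongr
    exact hsum.sum_le_tsum _ fun j _ => le_min (hBnn j) zero_le_one
  have hbounds := hseq.bounds_of_majorant hP hμ hL hA hLip hB0 hB fun k => (hpartial k).trans hρ
  obtain ⟨ustar, hu⟩ : ∃ ustar, Tendsto u atTop (𝓝 ustar) := by
    refine cauchySeq_tendsto_of_complete (cauchySeq_of_dist_le_of_summable _ (fun k => ?_)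
      (hsum.mul_left (μ / L)))
    rw [dist_eq_norm, ← neg_sub, norm_neg]
    exact (norm_le_l1Norm _).trans (hbounds k).2
  refine ⟨ustar, hu, ?_, le_of_tendsto ((continuous_l1Norm.tendsto ustar).comp hu)
    (Eventually.of_forall fun k => (hbounds k).1.1.trans (hpartial k))⟩
  have hres : Tendsto (fun k => P (u k)) atTop (𝓝 0) := by
    refine squeeze_zero_norm (fun k => ?_) (by simpa using hlim.const_mul (μ ^ 2 / L))
    calc ‖P (u k)‖ = μ ^ 2 / L * scaledResidual P μ L (u k) := by
          rw [scaledResidual, linfNorm_eq_norm]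
          field_simp
      _ ≤ μ ^ 2 / L * B k := by gcongr; exact (hbounds k).1.2
  exact tendsto_nhds_unique ((hP.continuous.tendsto ustar).comp hu) hres

end IsDampedSparseNewton

theorem statement12_general {n m : ℕ} (P : (Fin n → ℝ) → (Fin m → ℝ)) (hP : ContDiff ℝ 1 P)
    (s : ℝ) (hs : s = linfNorm (P 0)) (hspos : 0 < s)
    (ρ : ℝ) (Bρ : Set (Fin n → ℝ)) (hB : Bρ = {v | l1Norm v ≤ ρ})
    (μ : ℝ) (hμ : 0 < μ)
    (hA' : ∀ v ∈ Bρ, ∀ h : Fin m → ℝ,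
      μ * l1Norm h ≤ linfNorm (transposeApply (fderiv ℝ P v) h))
    (L : ℝ) (hL : 0 < L)
    (hLip : ∀ a ∈ Bρ, ∀ b ∈ Bρ, ∀ v : Fin n → ℝ,
      linfNorm ((fderiv ℝ P a - fderiv ℝ P b) v) ≤ L * l1Norm (a - b) * l1Norm v)
    (kmax : ℤ) (hkmax : kmax = max 0 (⌈2 * (L * s / μ ^ 2)⌉ - 2))
    (vbar : ℝ) (hvbar : vbar = L * s / μ ^ 2 - (kmax : ℝ) / 2)
    (hρbig : ρ ≥ μ / L * ((kmax : ℝ) + 2 * H0 (vbar / 2)))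
    -- a damped sparse-Newton sequence from `u0 = 0`:
    (u w : ℕ → Fin n → ℝ) (γ : ℕ → ℝ) (hu0 : u 0 = 0)
    (hw_eq : ∀ k, fderiv ℝ P (u k) (w k) = P (u k))
    (hw_min : ∀ k, ∀ v : Fin n → ℝ, fderiv ℝ P (u k) v = P (u k) →
      l1Norm (w k) ≤ l1Norm v)
    (hγ : ∀ k, γ k = if P (u k) = 0 then 1
      else min 1 (μ ^ 2 / (L * linfNorm (P (u k)))))
    (hstep : ∀ k, u (k + 1) = u k - γ k • w k) :
    ∃ ustar : Fin n → ℝ, Tendsto u atTop (𝓝 ustar) ∧ P ustar = 0 ∧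
      l1Norm ustar ≤ μ / L * ((kmax : ℝ) + 2 * H0 (vbar / 2)) := by
  subst hB
  obtain ⟨hv0, hv1, hvN⟩ := hvbar ▸ sub_half_bounds_of_eq_max_ceil (by positivity) hkmax
  have hkmax_cast : ((kmax.toNat : ℕ) : ℝ) = kmax := by
    exact_mod_cast Int.toNat_of_nonneg (hkmax ▸ le_max_left _ _)
  have hδ0 : 0 ≤ vbar / 2 := by linarith
  have hδ1 : vbar / 2 < 1 := by linarith
  have hB := newtonMajorant_newtonBound (N := kmax.toNat) hδ0 (by linarith) fun h =>
    by linarith [hvN (by omega)]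
  have hB0 : scaledResidual P μ L (u 0) ≤ newtonBound kmax.toNat (vbar / 2) 0 := by
    rw [hu0, newtonBound_of_le (Nat.zero_le _), scaledResidual, ← hs, hkmax_cast, hvbar]
    push_cast
    linarith
  have hT : μ / L * ∑' k, min (newtonBound kmax.toNat (vbar / 2) k) 1 ≤
      μ / L * ((kmax : ℝ) + 2 * H0 (vbar / 2)) := by
    rw [← hkmax_cast]
    gcongr
    exact tsum_min_newtonBound_le hδ0 hδ1
  obtain ⟨ustar, hu, hPu, hnorm⟩ := IsDampedSparseNewton.exists_tendsto_of_majorant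
    ⟨hw_eq, hw_min, hγ, hstep⟩ (hP.differentiable one_ne_zero) hμ hL hA' hLip hB0
    (fun k => (hB k).le) (summable_min_newtonBound hδ0 hδ1) (tendsto_newtonBound hδ0 hδ1)
    (by rw [hu0, l1Norm_zero, zero_add]; exact hT.trans hρbig)
  rw [hu0, l1Norm_zero, zero_add] at hnorm
  exact ⟨ustar, hu, hPu, hnorm.trans hT⟩

/-- ℓ1-norm bound on the solution found from zero initialization:
every damped sparse-Newton sequence from `u⁰ = 0` converges to a zero `u*` of
`P` with `‖u*‖₁ ≤ (μ/L)(k_max + 2H₀(v̄/2))`. -/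
theorem statement12 {n m : ℕ} (P : (Fin n → ℝ) → (Fin m → ℝ)) (hP : ContDiff ℝ 1 P)
    (s : ℝ) (hs : s = linfNorm (P 0)) (hspos : 0 < s)
    (ρ : ℝ) (hρ : 0 < ρ) (Bρ : Set (Fin n → ℝ)) (hB : Bρ = {v | l1Norm v ≤ ρ})
    (μ : ℝ) (hμ : 0 < μ)
    (hA' : ∀ v ∈ Bρ, ∀ h : Fin m → ℝ,
      μ * l1Norm h ≤ linfNorm (transposeApply (fderiv ℝ P v) h))
    (L : ℝ) (hL : 0 < L)
    (hLip : ∀ a ∈ Bρ, ∀ b ∈ Bρ, ∀ v : Fin n → ℝ,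
      linfNorm ((fderiv ℝ P a - fderiv ℝ P b) v) ≤ L * l1Norm (a - b) * l1Norm v)
    (kmax : ℤ) (hkmax : kmax = max 0 (⌈2 * (L * s / μ ^ 2)⌉ - 2))
    (vbar : ℝ) (hvbar : vbar = L * s / μ ^ 2 - (kmax : ℝ) / 2)
    (hρbig : ρ ≥ μ / L * ((kmax : ℝ) + 2 * H0 (vbar / 2)))
    -- a damped sparse-Newton sequence from `u0 = 0`:
    (u w : ℕ → Fin n → ℝ) (γ : ℕ → ℝ) (hu0 : u 0 = 0)
    (hw_eq : ∀ k, fderiv ℝ P (u k) (w k) = P (u k))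
    (hw_min : ∀ k, ∀ v : Fin n → ℝ, fderiv ℝ P (u k) v = P (u k) →
      l1Norm (w k) ≤ l1Norm v)
    (hγ : ∀ k, γ k = if P (u k) = 0 then 1
      else min 1 (μ ^ 2 / (L * linfNorm (P (u k)))))
    (hstep : ∀ k, u (k + 1) = u k - γ k • w k) :
    ∃ ustar : Fin n → ℝ, Tendsto u atTop (𝓝 ustar) ∧ P ustar = 0 ∧
      l1Norm ustar ≤ μ / L * ((kmax : ℝ) + 2 * H0 (vbar / 2)) :=
  statement12_general P hP s hs hspos ρ Bρ hB μ hμ hA' L hL hLip kmax hkmax vbar hvbar hρbig u w γ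
    hu0 hw_eq hw_min hγ hstep
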